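/- For all real y, 8(0.9126 + cos y)²(0.2766 + cos y)² ≥ 0, and expanding gives a cosine polynomial Σ_{k=0}^4 a_k cos(ky) with all coefficients a_k ≥ 0. -/

import Mathlib

/-! Writing `s = a + b`, `p = a b`, the product `8 ((a + cos y)(b + cos y))²` is a quartic in
`cos y` whose coefficients are polynomials in `s` and `p` with nonnegative coefficients; the
power-reduction formulas for `cos² y`, `cos³ y`, `cos⁴ y` only add nonnegative multiples of the
`cos (k y)`, so for `a, b ≥ 0` every coefficient of the cosine expansion is nonnegative. -/

open Real

lemma Real.cos_four_mul (y : ℝ) : cos (4 * y) = 8 * cos y ^ 4 - 8 * cos y ^ 2 + 1 := by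
  rw [show 4 * y = 2 * (2 * y) by ring, cos_two_mul, cos_two_mul]
  ring

noncomputable def sqMulSqAddCosCoeffs (a b : ℝ) : Fin 5 → ℝ :=
  let s := a + b
  let p := a * b
  ![3 + 4 * (s ^ 2 + 2 * p) + 8 * p ^ 2, 12 * s + 16 * p * s, 4 + 4 * (s ^ 2 + 2 * p), 4 * s, 1]

lemma sqMulSqAddCosCoeffs_nonneg {a b : ℝ} (ha : 0 ≤ a) (hb : 0 ≤ b) (k : Fin 5) :
    0 ≤ sqMulSqAddCosCoeffs a b k := by
  fin_cases k <;> simp [sqMulSqAddCosCoeffs] <;> positivity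

lemma eight_mul_sq_add_cos_mul_sq_add_cos (a b y : ℝ) :
    8 * (a + cos y) ^ 2 * (b + cos y) ^ 2
      = ∑ k : Fin 5, sqMulSqAddCosCoeffs a b k * cos ((k : ℕ) * y) := by
  simp only [Fin.sum_univ_five, sqMulSqAddCosCoeffs, Fin.val_zero, Fin.val_one, Fin.val_two,
    Matrix.cons_val]
  norm_num [show ((3 : Fin 5) : ℕ) = 3 from rfl, show ((4 : Fin 5) : ℕ) = 4 from rfl,
    cos_two_mul, cos_three_mul, cos_four_mul]
  ring

theorem stmt_1 :
    (∀ y : ℝ, 0 ≤ 8 * (0.9126 + Real.cos y) ^ 2 * (0.2766 + Real.cos y) ^ 2) ∧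
    ∃ a : Fin 5 → ℝ, (∀ k, 0 ≤ a k) ∧
      ∀ y : ℝ, 8 * (0.9126 + Real.cos y) ^ 2 * (0.2766 + Real.cos y) ^ 2
        = ∑ k : Fin 5, a k * Real.cos ((k : ℕ) * y) :=
  ⟨fun _ => by positivity,
    sqMulSqAddCosCoeffs 0.9126 0.2766,
    sqMulSqAddCosCoeffs_nonneg (by norm_num) (by norm_num),
    eight_mul_sq_add_cos_mul_sq_add_cos 0.9126 0.2766⟩
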